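/- With δ-best responses: for profiles x, x', ε ∈ [0,1], and any player i, max_k (u_i^s((1−ε)x + εx'))_k ≤ (1−ε)·max_{k ∈ Br_i^δ(x)}(u_i^s(x))_k + ε·max_{k ∈ Br_i^δ(x)}(u_i^s(x'))_k + Λ_i^δ(x, x', ε), where Λ_i^δ(x, x', ε) = max{0, max_{k ∉ Br_i^δ(x)}(u_i^s(x̄))_k − max_{l ∈ Br_i^δ(x)}(u_i^s(x̄))_l} and x̄ = (1−ε)x + εx'. -/

import Mathlib

open Finset
open scoped Classical

noncomputable section

/-- maximum of `v` over a finset `S` (junk value `0` if `S` is empty). -/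
noncomputable def fmaxOn {α : Type*} (S : Finset α) (v : α → ℝ) : ℝ :=
  if h : S.Nonempty then S.sup' h v else 0

/-- minimum of `v` over a finset `S` (junk value `0` if `S` is empty). -/
noncomputable def fminOn {α : Type*} (S : Finset α) (v : α → ℝ) : ℝ :=
  if h : S.Nonempty then S.inf' h v else 0

section Polymatrix

variable {n : ℕ} (m : Fin n → ℕ) (N : Fin n → Finset (Fin n))
  (A : ∀ i j : Fin n, Matrix (Fin (m i)) (Fin (m j)) ℝ)

/-- vector of pure-strategy payoffs of player `i` against profile `x`:
`u_i^s(x) = Σ_{j ∈ N(i)} A_ij x_j`. -/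
def usVec (i : Fin n) (x : ∀ j, Fin (m j) → ℝ) : Fin (m i) → ℝ :=
  fun k => ∑ j ∈ N i, ∑ q, A i j k q * x j q

/-- payoff to player `i` from playing the (possibly formal) strategy `y`
against profile `x`: `u_i(y, x) = yᵀ u_i^s(x)`. -/
def payTo (i : Fin n) (y : Fin (m i) → ℝ) (x : ∀ j, Fin (m j) → ℝ) : ℝ :=
  ∑ k, y k * usVec m N A i x k

/-- payoff of player `i` under profile `x`. -/
def payoff (i : Fin n) (x : ∀ j, Fin (m j) → ℝ) : ℝ := payTo m N A i (x i) x

/-- best-response payoff of player `i` against `x`. -/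
def brp (i : Fin n) (x : ∀ j, Fin (m j) → ℝ) : ℝ := fmaxOn univ (usVec m N A i x)

/-- pure best responses of player `i` against `x`. -/
def brSet (i : Fin n) (x : ∀ j, Fin (m j) → ℝ) : Finset (Fin (m i)) :=
  univ.filter fun k => ∀ l, usVec m N A i x l ≤ usVec m N A i x k

/-- `δ`-best responses of player `i` against `x`. -/
def brdSet (δ : ℝ) (i : Fin n) (x : ∀ j, Fin (m j) → ℝ) : Finset (Fin (m i)) :=
  univ.filter fun k => brp m N A i x - δ ≤ usVec m N A i x k

/-- regret of player `i` under `x`: `f_i(x)`. -/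
def regret (i : Fin n) (x : ∀ j, Fin (m j) → ℝ) : ℝ :=
  brp m N A i x - payoff m N A i x

/-- maximum regret `f(x) = max_i f_i(x)`. -/
def maxRegret (x : ∀ j, Fin (m j) → ℝ) : ℝ := fmaxOn univ fun i => regret m N A i x

/-- set of players with maximum regret `K(x)`. -/
def Kset (x : ∀ j, Fin (m j) → ℝ) : Finset (Fin n) :=
  univ.filter fun i => regret m N A i x = maxRegret m N A x

/-- `Df_i^δ(x, x')`. -/
def Dfd (δ : ℝ) (i : Fin n) (x x' : ∀ j, Fin (m j) → ℝ) : ℝ :=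
  fmaxOn (brdSet m N A δ i x) (usVec m N A i x')
    - payTo m N A i (x i) x' - payTo m N A i (x' i) x + payTo m N A i (x i) x

/-- `Df^δ(x, x') = max_{i ∈ K(x)} Df_i^δ(x, x') - f(x)`. -/
def DfdAll (δ : ℝ) (x x' : ∀ j, Fin (m j) → ℝ) : ℝ :=
  fmaxOn (Kset m N A x) (fun i => Dfd m N A δ i x x') - maxRegret m N A x

/-- `Df_i(x, x')` (with exact best responses). -/
def Dfbr (i : Fin n) (x x' : ∀ j, Fin (m j) → ℝ) : ℝ :=
  fmaxOn (brSet m N A i x) (usVec m N A i x')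
    - payTo m N A i (x i) x' - payTo m N A i (x' i) x + payTo m N A i (x i) x

/-- the profile `(1-ε)x + εx'`. -/
def mix (x x' : ∀ j, Fin (m j) → ℝ) (ε : ℝ) : ∀ j, Fin (m j) → ℝ :=
  fun j => (1 - ε) • x j + ε • x' j

/-- `Λ_i^δ(x, x', ε)`; if the complement of the `δ`-best-response set is empty
the inner maximum is `-∞`, i.e. `Λ_i^δ = 0`. -/
def Lamd (δ : ℝ) (i : Fin n) (x x' : ∀ j, Fin (m j) → ℝ) (ε : ℝ) : ℝ :=
  if _h : ((brdSet m N A δ i x)ᶜ).Nonempty then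
    max 0 (fmaxOn (brdSet m N A δ i x)ᶜ (usVec m N A i (mix m x x' ε))
         - fmaxOn (brdSet m N A δ i x) (usVec m N A i (mix m x x' ε)))
  else 0

/-- `Λ_i(x, x', ε)` (with exact best responses). -/
def LamBr (i : Fin n) (x x' : ∀ j, Fin (m j) → ℝ) (ε : ℝ) : ℝ :=
  if _h : ((brSet m N A i x)ᶜ).Nonempty then
    max 0 (fmaxOn (brSet m N A i x)ᶜ (usVec m N A i (mix m x x' ε))
         - fmaxOn (brSet m N A i x) (usVec m N A i (mix m x x' ε)))
  else 0

/-- `x` is a mixed strategy profile. -/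
def isProfile (x : ∀ j, Fin (m j) → ℝ) : Prop :=
  ∀ j, x j ∈ stdSimplex ℝ (Fin (m j))

/-- the game is normalized: all pure-strategy payoffs of every player lie in
`[0,1]` against every mixed profile. -/
def normalized : Prop :=
  ∀ i (x : ∀ j, Fin (m j) → ℝ), isProfile m x →
    ∀ k, usVec m N A i x k ∈ Set.Icc (0:ℝ) 1

/-! Linearity of `u_i^s` bounds the best payoff inside `Br_i^δ(x)` at `x̄` by the convex
combination of the best payoffs inside at `x` and at `x'`; a strategy outside `Br_i^δ(x)`
beats the best one inside by at most `Λ_i^δ`. -/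

section FmaxOn

variable {α : Type*} {S : Finset α} {v w : α → ℝ}

lemma fmaxOn_empty (v : α → ℝ) : fmaxOn ∅ v = 0 := by
  simp [fmaxOn]

lemma fmaxOn_le (hS : S.Nonempty) {c : ℝ} (H : ∀ k ∈ S, v k ≤ c) : fmaxOn S v ≤ c := by
  rw [fmaxOn, dif_pos hS]
  exact Finset.sup'_le hS v H

lemma le_fmaxOn {k : α} (hk : k ∈ S) : v k ≤ fmaxOn S v := by
  rw [fmaxOn, dif_pos ⟨k, hk⟩]
  exact Finset.le_sup' v hk

lemma fmaxOn_mul_add_mul_le {a b : ℝ} (ha : 0 ≤ a) (hb : 0 ≤ b) :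
    fmaxOn S (fun k => a * v k + b * w k) ≤ a * fmaxOn S v + b * fmaxOn S w := by
  rcases S.eq_empty_or_nonempty with rfl | hS
  · simp [fmaxOn_empty]
  · refine fmaxOn_le hS fun k hk => ?_
    have hv : a * v k ≤ a * fmaxOn S v := mul_le_mul_of_nonneg_left (le_fmaxOn hk) ha
    have hw : b * w k ≤ b * fmaxOn S w := mul_le_mul_of_nonneg_left (le_fmaxOn hk) hb
    linarith

lemma fmaxOn_univ_le_add_gap [Fintype α] [DecidableEq α] (S : Finset α) (v : α → ℝ) :
    fmaxOn univ v ≤ fmaxOn S v +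
      if _h : Sᶜ.Nonempty then max 0 (fmaxOn Sᶜ v - fmaxOn S v) else 0 := by
  have hgap : 0 ≤ if _h : Sᶜ.Nonempty then max 0 (fmaxOn Sᶜ v - fmaxOn S v) else 0 := by
    split <;> simp
  rcases (univ : Finset α).eq_empty_or_nonempty with huniv | huniv
  · have hS : S = ∅ := Finset.subset_empty.mp (huniv ▸ S.subset_univ)
    have hmax : fmaxOn S v = 0 := by rw [hS, fmaxOn_empty]
    rw [huniv, fmaxOn_empty]
    linarith
  refine fmaxOn_le huniv fun k _ => ?_
  by_cases hk : k ∈ S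
  · linarith [le_fmaxOn (v := v) hk]
  · have hk' : k ∈ Sᶜ := Finset.mem_compl.mpr hk
    rw [dif_pos ⟨k, hk'⟩]
    linarith [le_fmaxOn (v := v) hk', le_max_right 0 (fmaxOn Sᶜ v - fmaxOn S v)]

end FmaxOn

lemma usVec_mix (i : Fin n) (x x' : ∀ j, Fin (m j) → ℝ) (ε : ℝ) (k : Fin (m i)) :
    usVec m N A i (mix m x x' ε) k
      = (1 - ε) * usVec m N A i x k + ε * usVec m N A i x' k := by
  simp only [usVec, mix, Pi.add_apply, Pi.smul_apply, smul_eq_mul, Finset.mul_sum,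
    ← Finset.sum_add_distrib]
  exact Finset.sum_congr rfl fun j _ => Finset.sum_congr rfl fun q _ => by ring

theorem stmt5 (δ : ℝ) (i : Fin n)
    (x x' : ∀ j, Fin (m j) → ℝ) (ε : ℝ) (hε : ε ∈ Set.Icc (0:ℝ) 1) :
    brp m N A i (mix m x x' ε)
      ≤ (1 - ε) * fmaxOn (brdSet m N A δ i x) (usVec m N A i x)
        + ε * fmaxOn (brdSet m N A δ i x) (usVec m N A i x')
        + Lamd m N A δ i x x' ε := by
  obtain ⟨hε0, hε1⟩ := hε
  have hsplit := fmaxOn_univ_le_add_gap (brdSet m N A δ i x) (usVec m N A i (mix m x x' ε))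
  have hconvex : fmaxOn (brdSet m N A δ i x) (usVec m N A i (mix m x x' ε))
      ≤ (1 - ε) * fmaxOn (brdSet m N A δ i x) (usVec m N A i x)
        + ε * fmaxOn (brdSet m N A δ i x) (usVec m N A i x') := by
    rw [funext (usVec_mix m N A i x x' ε)]
    exact fmaxOn_mul_add_mul_le (by linarith) hε0
  exact hsplit.trans (add_le_add_left hconvex (Lamd m N A δ i x x' ε))

end Polymatrix
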